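/- For the discrete-time surplus process U_n = u + n·p − H_n with initial surplus u ∈ (0,1) and constant premium p ∈ (0,1), the limit lim_{n→∞} 𝔼(U_n)/n exists and equals p − a_0/(1 − Σ_{i=1}^∞ a_i); in particular, lim_{n→∞} 𝔼(U_n)/n > 0 if and only if p > a_0/(1 − Σ_{i=1}^∞ a_i). -/

import Mathlib

open Filter Topology Finset MeasureTheory

/-!
Writing `m n = 𝔼 ξ n`, the tower property turns the conditional intensity into the renewal
equation `m n = a 0 + ∑_{i < n} a (n - i) * m i`. Summing it over `n` gives
`(1 - A) * ∑_{i ≤ n} m i = n * a 0 - ∑_{i ≤ n} m i * r (n - i)`, where `A = ∑_{i ≥ 1} a i` and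
`r k = ∑_{j > k} a j` is the tail of the kernel. As `m` is bounded and `r k → 0`, the error term
is `o(n)` by Cesàro, so `𝔼 H n / n → a 0 / (1 - A)`.
-/

theorem sum_Icc_one_sub_eq_sum_range {M : Type*} [AddCommMonoid M] (f : ℕ → M) (n : ℕ) :
    ∑ i ∈ Icc 1 n, f (n - i) = ∑ k ∈ range n, f k := by
  rw [← Ico_add_one_right_eq_Icc, sum_Ico_reflect f 1 le_rfl]
  simp

theorem tendsto_sum_Icc_mul_sub_div_atTop_zero {m r : ℕ → ℝ} {C : ℝ}
    (hm : ∀ i, 1 ≤ i → |m i| ≤ C) (hr : Tendsto r atTop (𝓝 0)) :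
    Tendsto (fun n : ℕ => (∑ i ∈ Icc 1 n, m i * r (n - i)) / n) atTop (𝓝 0) := by
  have hces : Tendsto (fun n : ℕ => (n : ℝ)⁻¹ * ∑ k ∈ range n, C * |r k|) atTop (𝓝 0) := by
    simpa using (hr.abs.const_mul C).cesaro
  refine squeeze_zero_norm' (Eventually.of_forall fun n => ?_) hces
  rw [Real.norm_eq_abs, abs_div, Nat.abs_cast, div_eq_inv_mul,
    ← sum_Icc_one_sub_eq_sum_range (fun k => C * |r k|)]
  gcongr
  refine (abs_sum_le_sum_abs _ _).trans (sum_le_sum fun i hi => ?_)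
  rw [abs_mul]
  exact mul_le_mul_of_nonneg_right (hm i (mem_Icc.1 hi).1) (abs_nonneg _)

section Renewal

variable {b m : ℕ → ℝ} {c : ℝ}

theorem sum_Icc_eq_of_renewal
    (hm : ∀ n, 1 ≤ n → m n = c + ∑ i ∈ Icc 1 (n - 1), b (n - i) * m i) (n : ℕ) :
    ∑ i ∈ Icc 1 n, m i = n * c + ∑ i ∈ Icc 1 n, m i * ∑ j ∈ range (n - i), b (j + 1) := by
  induction n with
  | zero => simp
  | succ n ih =>
    have hstep : ∀ i ∈ Icc 1 n, m i * ∑ j ∈ range (n + 1 - i), b (j + 1)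
        = m i * ∑ j ∈ range (n - i), b (j + 1) + b (n + 1 - i) * m i := by
      intro i hi
      rw [show n + 1 - i = n - i + 1 by grind, sum_range_succ]
      grind
    rw [sum_Icc_succ_top (by omega), sum_Icc_succ_top (by omega), ih, hm (n + 1) (by omega),
      Nat.add_sub_cancel, sum_congr rfl hstep, sum_add_distrib]
    push_cast
    simp only [tsub_self, range_zero, sum_empty, mul_zero, add_zero]
    ring

theorem tendsto_sum_Icc_div_of_renewal (hb : Summable fun i => b (i + 1))
    (hb1 : ∑' i, b (i + 1) ≠ 1)
    (hm : ∀ n, 1 ≤ n → m n = c + ∑ i ∈ Icc 1 (n - 1), b (n - i) * m i)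
    {C : ℝ} (hC : ∀ i, 1 ≤ i → |m i| ≤ C) :
    Tendsto (fun n : ℕ => (∑ i ∈ Icc 1 n, m i) / n) atTop (𝓝 (c / (1 - ∑' i, b (i + 1)))) := by
  set A := ∑' i, b (i + 1)
  set r : ℕ → ℝ := fun k => A - ∑ j ∈ range k, b (j + 1)
  have hr : Tendsto r atTop (𝓝 0) := by
    simpa [A] using hb.hasSum.tendsto_sum_nat.const_sub A
  have hid : ∀ n : ℕ, (1 - A) * ∑ i ∈ Icc 1 n, m i = n * c - ∑ i ∈ Icc 1 n, m i * r (n - i) := by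
    intro n
    have hsum := sum_Icc_eq_of_renewal hm n
    simp only [r, mul_sub, sum_sub_distrib, ← sum_mul]
    linear_combination hsum
  have hlim : Tendsto (fun n : ℕ => (c - (∑ i ∈ Icc 1 n, m i * r (n - i)) / n) / (1 - A)) atTop
      (𝓝 (c / (1 - A))) := by
    simpa using ((tendsto_sum_Icc_mul_sub_div_atTop_zero hC hr).const_sub c).div_const (1 - A)
  refine hlim.congr' ?_
  filter_upwards [eventually_ne_atTop 0] with n hn
  have h1A : 1 - A ≠ 0 := sub_ne_zero.2 hb1.symm
  field_simp
  linear_combination (hid n).symm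

end Renewal

section ZeroOne

variable {Ω : Type*} [MeasurableSpace Ω] {μ : Measure Ω} {X : Ω → ℝ}

theorem integrable_of_zero_or_one [IsFiniteMeasure μ] (hX : Measurable X)
    (h01 : ∀ ω, X ω = 0 ∨ X ω = 1) : Integrable X μ :=
  Integrable.of_bound hX.aestronglyMeasurable 1 (ae_of_all μ fun ω => by
    rcases h01 ω with h | h <;> simp [h])

theorem integral_eq_measureReal_of_zero_or_one (hX : Measurable X)
    (h01 : ∀ ω, X ω = 0 ∨ X ω = 1) : ∫ ω, X ω ∂μ = μ.real {ω | X ω = 1} := by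
  have hs : MeasurableSet {ω | X ω = 1} := hX (measurableSet_singleton 1)
  rw [← integral_indicator_one hs]
  congr 1
  funext ω
  rcases h01 ω with h | h <;> simp [h]

end ZeroOne

theorem integral_eq_add_sum_of_condExp_eq {Ω ι : Type*} {m m₀ : MeasurableSpace Ω}
    {μ : Measure Ω} [IsProbabilityMeasure μ] (hm : m ≤ m₀) {X : Ω → ℝ} {Y : ι → Ω → ℝ}
    {s : Finset ι} {c : ℝ} {w : ι → ℝ} (hY : ∀ i ∈ s, Integrable (Y i) μ)
    (hX : μ[X | m] =ᵐ[μ] fun ω => c + ∑ i ∈ s, w i * Y i ω) :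
    ∫ ω, X ω ∂μ = c + ∑ i ∈ s, w i * ∫ ω, Y i ω ∂μ := by
  have hwY : ∀ i ∈ s, Integrable (fun ω => w i * Y i ω) μ := fun i hi => (hY i hi).const_mul _
  rw [← integral_condExp hm, integral_congr_ae hX, integral_add (integrable_const c)
    (integrable_finsetSum s hwY), integral_finsetSum s hwY]
  simp [integral_const_mul]

theorem dthp_surplus_mean_limit_general
    {Ω : Type*} [MeasurableSpace Ω] (μ : Measure Ω) [IsProbabilityMeasure μ]
    (a : ℕ → ℝ) (ξ : ℕ → Ω → ℝ)
    (ha_pos : ∀ i, 0 < a i)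
    (ha_sum : Summable a)
    (ha_lt_one : ∑' i, a i < 1)
    (hmeas : ∀ n, Measurable (ξ n))
    (hval : ∀ n, 1 ≤ n → ∀ ω, ξ n ω = 0 ∨ ξ n ω = 1)
    (hinit : μ {ω | ξ 1 ω = 1} = ENNReal.ofReal (a 0))
    (hcond : ∀ n, 2 ≤ n →
      μ[ξ n | ⨆ i ∈ Finset.Icc 1 (n - 1), MeasurableSpace.comap (ξ i) Real.measurableSpace]
        =ᵐ[μ] fun ω => a 0 + ∑ i ∈ Finset.Icc 1 (n - 1), a (n - i) * ξ i ω)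
    (u p : ℝ)
    (U : ℕ → Ω → ℝ)
    (hU : ∀ n, 1 ≤ n → ∀ ω, U n ω = u + n * p - ∑ i ∈ Finset.Icc 1 n, ξ i ω)
    :
    Tendsto (fun n : ℕ => (∫ ω, U n ω ∂μ) / n) atTop
      (𝓝 (p - a 0 / (1 - ∑' i, a (i + 1)))) ∧
    (0 < p - a 0 / (1 - ∑' i, a (i + 1)) ↔ a 0 / (1 - ∑' i, a (i + 1)) < p) := by
  have hint (n : ℕ) (hn : 1 ≤ n) : Integrable (ξ n) μ :=
    integrable_of_zero_or_one (hmeas n) (hval n hn)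
  set m : ℕ → ℝ := fun n => ∫ ω, ξ n ω ∂μ
  have hm_le (n : ℕ) (hn : 1 ≤ n) : |m n| ≤ 1 := by
    simp only [m, integral_eq_measureReal_of_zero_or_one (hmeas n) (hval n hn)]
    rw [abs_of_nonneg measureReal_nonneg]
    exact measureReal_le_one
  have hrenewal (n : ℕ) (hn : 1 ≤ n) : m n = a 0 + ∑ i ∈ Icc 1 (n - 1), a (n - i) * m i := by
    rcases hn.eq_or_lt with rfl | hn
    · simp [m, integral_eq_measureReal_of_zero_or_one (hmeas 1) (hval 1 le_rfl), measureReal_def,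
        hinit, (ha_pos 0).le]
    · exact integral_eq_add_sum_of_condExp_eq
        (iSup₂_le fun i _ => (hmeas i).comap_le) (fun i hi => hint i (mem_Icc.1 hi).1) (hcond n hn)
  have hA : ∑' i, a (i + 1) ≠ 1 := by
    have := ha_sum.tsum_eq_zero_add
    linarith [ha_pos 0]
  have hmean (n : ℕ) (hn : 1 ≤ n) : ∫ ω, U n ω ∂μ = u + n * p - ∑ i ∈ Icc 1 n, m i := by
    have hξ (i) (hi : i ∈ Icc 1 n) : Integrable (ξ i) μ := hint i (mem_Icc.1 hi).1
    rw [integral_congr_ae (ae_of_all μ (hU n hn)), integral_sub (integrable_const _)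
      (integrable_finsetSum _ hξ), integral_finsetSum _ hξ]
    simp [m]
  have hS := tendsto_sum_Icc_div_of_renewal ((summable_nat_add_iff 1).2 ha_sum) hA hrenewal hm_le
  refine ⟨?_, sub_pos⟩
  have hlim := ((tendsto_const_div_atTop_nhds_zero_nat u).add_const p).sub hS
  rw [zero_add] at hlim
  refine hlim.congr' ?_
  filter_upwards [eventually_ge_atTop 1] with n hn
  have hn0 : (n : ℝ) ≠ 0 := by positivity
  rw [hmean n hn]
  field_simp

theorem dthp_surplus_mean_limit
    {Ω : Type*} [MeasurableSpace Ω] (μ : Measure Ω) [IsProbabilityMeasure μ]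
    (a : ℕ → ℝ) (ξ : ℕ → Ω → ℝ)
    (ha_pos : ∀ i, 0 < a i)
    (ha_sum : Summable a)
    (ha_lt_one : ∑' i, a i < 1)
    (ha_moment : Summable (fun i : ℕ => (i : ℝ) * a i))
    (hmeas : ∀ n, Measurable (ξ n))
    (hval : ∀ n, 1 ≤ n → ∀ ω, ξ n ω = 0 ∨ ξ n ω = 1)
    (hinit : μ {ω | ξ 1 ω = 1} = ENNReal.ofReal (a 0))
    (hcond : ∀ n, 2 ≤ n →
      μ[ξ n | ⨆ i ∈ Finset.Icc 1 (n - 1), MeasurableSpace.comap (ξ i) Real.measurableSpace]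
        =ᵐ[μ] fun ω => a 0 + ∑ i ∈ Finset.Icc 1 (n - 1), a (n - i) * ξ i ω)
    (u p : ℝ) (hu : u ∈ Set.Ioo (0 : ℝ) 1) (hp : p ∈ Set.Ioo (0 : ℝ) 1)
    (U : ℕ → Ω → ℝ)
    (hU : ∀ n, 1 ≤ n → ∀ ω, U n ω = u + n * p - ∑ i ∈ Finset.Icc 1 n, ξ i ω)
    :
    Tendsto (fun n : ℕ => (∫ ω, U n ω ∂μ) / n) atTop
      (𝓝 (p - a 0 / (1 - ∑' i, a (i + 1)))) ∧
    (0 < p - a 0 / (1 - ∑' i, a (i + 1)) ↔ a 0 / (1 - ∑' i, a (i + 1)) < p) :=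
  dthp_surplus_mean_limit_general μ a ξ ha_pos ha_sum ha_lt_one hmeas hval hinit hcond u p U hU
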